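/- arXiv:2303.08467 — 2 statements merged into one kernel-verified Lean document; each statement's English description precedes it below -/
import Mathlib

section
/- Let b < 0 and λ < b (so b - 2λ > 0). Suppose Z₁, Zᵢ, Zⱼ : ℝ≥0 → ℝ are continuous with Z₁(t) > 0 for all t, and e^{b t}Z₁(t) → G₁ > 0, e^{λ t}Zᵢ(t) → Gᵢ, e^{λ t}Zⱼ(t) → Gⱼ as t → ∞. Then e^{-(b-2λ)T} ∫₀ᵀ (Zᵢ(s) Zⱼ(s))/Z₁(s) ds → Gᵢ Gⱼ /((b - 2λ) G₁) as T → ∞. -/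
open Real Filter

theorem supercritical_ratio_integral_limit (b lam G₁ Gi Gj : ℝ)
    (hb : b < 0) (hlam : lam < b) (hG₁ : 0 < G₁)
    (Z₁ Zi Zj : ℝ → ℝ)
    (hZ₁_cont : Continuous Z₁) (hZi_cont : Continuous Zi) (hZj_cont : Continuous Zj)
    (hZ₁_pos : ∀ t, 0 < Z₁ t)
    (h₁ : Tendsto (fun t => Real.exp (b * t) * Z₁ t) atTop (nhds G₁))
    (hi : Tendsto (fun t => Real.exp (lam * t) * Zi t) atTop (nhds Gi))
    (hj : Tendsto (fun t => Real.exp (lam * t) * Zj t) atTop (nhds Gj)) :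
    Tendsto (fun T => Real.exp (-(b - 2 * lam) * T) * ∫ s in (0:ℝ)..T, Zi s * Zj s / Z₁ s)
      atTop (nhds (Gi * Gj / ((b - 2 * lam) * G₁))) := by
  classical
  open MeasureTheory Set intervalIntegral in
  set c : ℝ := b - 2 * lam with hcdef
  have hcpos : 0 < c := by simp only [hcdef]; linarith
  set L : ℝ := Gi * Gj / G₁ with hLdef
  set f : ℝ → ℝ := fun s => Zi s * Zj s / Z₁ s with hfdef
  set g : ℝ → ℝ := fun s => Real.exp (-c * s) * f s with hgdef
  -- g is continuous and tends to L
  have hf_cont : Continuous f := (hZi_cont.mul hZj_cont).div hZ₁_cont fun t => (hZ₁_pos t).ne'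
  have hg_cont : Continuous g :=
    (Real.continuous_exp.comp (continuous_const.mul continuous_id)).mul hf_cont
  have hg_tendsto : Tendsto g atTop (nhds L) := by
    have h := (hi.mul hj).div h₁ hG₁.ne'
    refine h.congr fun s => ?_
    have h1 : Real.exp (b * s) ≠ 0 := (Real.exp_pos _).ne'
    have h2 : Z₁ s ≠ 0 := (hZ₁_pos s).ne'
    have he : Real.exp (-c * s) = Real.exp (lam * s) * Real.exp (lam * s) / Real.exp (b * s) := by
      rw [← Real.exp_add, ← Real.exp_sub]
      congr 1
      simp only [hcdef]; ring
    simp only [hgdef, hfdef, he, Pi.div_apply]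
    field_simp
  -- bound on g on [0, ∞)
  obtain ⟨C, hC⟩ : ∃ C : ℝ, ∀ s : ℝ, 0 ≤ s → |g s| ≤ C := by
    obtain ⟨M, hM⟩ := (Metric.tendsto_atTop.mp hg_tendsto) 1 one_pos
    obtain ⟨C₀, hC₀⟩ := (isCompact_Icc (a := (0:ℝ)) (b := max M 0)).exists_bound_of_continuousOn
      hg_cont.continuousOn
    refine ⟨max C₀ (|L| + 1), fun s hs => ?_⟩
    rcases le_or_gt s (max M 0) with h | h
    · exact le_trans (by simpa using hC₀ s ⟨hs, h⟩) (le_max_left _ _)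
    · have h1 : dist (g s) L < 1 := hM s ((le_max_left M 0).trans h.le)
      have : |g s| ≤ |L| + 1 := by
        have := abs_sub_abs_le_abs_sub (g s) L
        rw [Real.dist_eq] at h1
        linarith
      exact this.trans (le_max_right _ _)
  -- key algebraic identity
  have key : ∀ T : ℝ, Real.exp (-c * T) * ∫ s in (0:ℝ)..T, f s
      = ∫ u in (0:ℝ)..T, g (T - u) * Real.exp (-c * u) := by
    intro T
    have h1 : ∀ u : ℝ, g (T - u) * Real.exp (-c * u) = Real.exp (-c * T) * f (T - u) := by
      intro u
      have he : Real.exp (-c * (T - u)) * Real.exp (-c * u) = Real.exp (-c * T) := by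
        rw [← Real.exp_add]; congr 1; ring
      calc g (T - u) * Real.exp (-c * u)
          = Real.exp (-c * (T - u)) * Real.exp (-c * u) * f (T - u) := by
            simp only [hgdef]; ring
        _ = Real.exp (-c * T) * f (T - u) := by rw [he]
    simp only [h1]
    rw [intervalIntegral.integral_const_mul, intervalIntegral.integral_comp_sub_left f T]
    simp
  -- dominated convergence setup
  set F : ℝ → ℝ → ℝ :=
      fun T u => (Set.Ioc (0:ℝ) T).indicator (fun u => g (T - u) * Real.exp (-c * u)) u with hFdef
  set φ : ℝ → ℝ := fun u => (Set.Ioi (0:ℝ)).indicator (fun u => L * Real.exp (-c * u)) u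
    with hφdef
  set bound : ℝ → ℝ := fun u => (Set.Ioi (0:ℝ)).indicator (fun u => C * Real.exp (-c * u)) u
    with hbdef
  have hC0 : 0 ≤ C := le_trans (abs_nonneg _) (hC 0 le_rfl)
  have hbound_int : Integrable bound := by
    refine (IntegrableOn.integrable_indicator ?_ measurableSet_Ioi)
    exact (exp_neg_integrableOn_Ioi 0 hcpos).const_mul C
  have hF_meas : ∀ T : ℝ, AEStronglyMeasurable (F T) volume := by
    intro T
    exact (((hg_cont.comp (continuous_const.sub continuous_id)).mul
      (Real.continuous_exp.comp (continuous_const.mul continuous_id))).aestronglyMeasurable).indicator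
      measurableSet_Ioc
  have hF_bound : ∀ T : ℝ, ∀ u : ℝ, ‖F T u‖ ≤ bound u := by
    intro T u
    by_cases hu : u ∈ Set.Ioc (0:ℝ) T
    · rw [hFdef]
      simp only [Set.indicator_of_mem hu]
      have hu' : u ∈ Set.Ioi (0:ℝ) := hu.1
      rw [hbdef]
      simp only [Set.indicator_of_mem hu']
      rw [Real.norm_eq_abs, abs_mul, abs_of_pos (Real.exp_pos _)]
      have hg' : |g (T - u)| ≤ C := hC _ (by linarith [hu.2])
      exact mul_le_mul_of_nonneg_right hg' (Real.exp_pos _).le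
    · rw [hFdef]
      simp only [Set.indicator_of_notMem hu, norm_zero]
      rw [hbdef]
      exact Set.indicator_nonneg (fun x _ => mul_nonneg hC0 (Real.exp_pos _).le) u
  have hF_lim : ∀ u : ℝ, Tendsto (fun T => F T u) atTop (nhds (φ u)) := by
    intro u
    by_cases hu : u ∈ Set.Ioi (0:ℝ)
    · have hev : ∀ᶠ T in atTop, F T u = g (T - u) * Real.exp (-c * u) := by
        filter_upwards [eventually_ge_atTop u] with T hT
        rw [hFdef]
        exact Set.indicator_of_mem (Set.mem_Ioc.mpr ⟨hu, hT⟩) _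
      have htend : Tendsto (fun T : ℝ => g (T - u) * Real.exp (-c * u)) atTop
          (nhds (L * Real.exp (-c * u))) := by
        exact (hg_tendsto.comp (tendsto_atTop_add_const_right atTop (-u) tendsto_id)).mul_const _
      rw [hφdef]
      simp only [Set.indicator_of_mem hu]
      exact htend.congr' (hev.mono fun T h => h.symm)
    · have hev : ∀ᶠ T in atTop, F T u = 0 := by
        refine Eventually.of_forall fun T => ?_
        rw [hFdef]
        exact Set.indicator_of_notMem (fun h => hu h.1) _
      rw [hφdef]
      simp only [Set.indicator_of_notMem hu]
      exact tendsto_const_nhds.congr' (hev.mono fun T h => h.symm)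
  have hmain : Tendsto (fun T => ∫ u, F T u) atTop (nhds (∫ u, φ u)) := by
    exact tendsto_integral_filter_of_dominated_convergence bound
      (Eventually.of_forall hF_meas) (Eventually.of_forall fun T => ae_of_all _ (hF_bound T))
      hbound_int (ae_of_all _ hF_lim)
  -- compute the limit integral
  have hφ_int : (∫ u, φ u) = L / c := by
    rw [hφdef, MeasureTheory.integral_indicator measurableSet_Ioi,
      MeasureTheory.integral_const_mul]
    have : (∫ u in Set.Ioi (0:ℝ), Real.exp (-c * u))
        = c⁻¹ • ∫ x in Set.Ioi (c * 0), Real.exp (-x) := by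
      rw [← integral_comp_mul_left_Ioi (fun x => Real.exp (-x)) 0 hcpos]
      simp [neg_mul]
    rw [this]
    simp [integral_exp_neg_Ioi, integral_exp_Iic_zero, div_eq_mul_inv, mul_comm]
  -- identify the two functions eventually
  have heq : ∀ᶠ T in atTop, Real.exp (-c * T) * (∫ s in (0:ℝ)..T, f s) = ∫ u, F T u := by
    filter_upwards [eventually_ge_atTop (0:ℝ)] with T hT
    rw [key T, hFdef, MeasureTheory.integral_indicator measurableSet_Ioc,
      intervalIntegral.integral_of_le hT]
  have hfinal : (L / c) = Gi * Gj / (c * G₁) := by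
    rw [hLdef, div_div]
    ring_nf
  have : Tendsto (fun T => Real.exp (-c * T) * ∫ s in (0:ℝ)..T, f s) atTop
      (nhds (Gi * Gj / (c * G₁))) := by
    rw [← hfinal, ← hφ_int]
    exact hmain.congr' (heq.mono fun T h => h.symm)
  exact this
end

section
/- Let V(y, x) = y² + r‖x‖² on ℝ≥0 × ℝⁿ with r > 0, and define (A V)(y,x) = y + n r y + 2(a y − b y²) + 2 r xᵀ(m − κ y − θ x) for parameters a, b > 0, m, κ ∈ ℝⁿ, θ symmetric positive definite. Then for any c ∈ (0, 2 min(λ_min(θ), b)) and r ∈ (0, (2λ_min(θ) − c)(2b − c)/‖κ‖²), there exists a constant d ∈ ℝ such that (A V)(y,x) ≤ −c V(y,x) + d for all (y,x) ∈ ℝ≥0 × ℝⁿ. -/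
set_option maxHeartbeats 1000000


open Matrix Pointwise

theorem foster_lyapunov_drift_inequality {n : ℕ} (hn : 1 ≤ n)
    (a b : ℝ) (ha : 0 < a) (hb : 0 < b)
    (m κ : Fin n → ℝ) (hκ : κ ≠ 0)
    (θ : Matrix (Fin n) (Fin n) ℝ) (hθ : θ.PosDef)
    (lmin : ℝ) (hlmin : IsLeast (spectrum ℝ θ) lmin)
    (c r : ℝ) (hc : 0 < c) (hc' : c < 2 * min lmin b)
    (hr : 0 < r) (hr' : r < (2 * lmin - c) * (2 * b - c) / (κ ⬝ᵥ κ))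
    (V AV : ℝ → (Fin n → ℝ) → ℝ)
    (hV : ∀ y x, V y x = y ^ 2 + r * (x ⬝ᵥ x))
    (hAV : ∀ y x, AV y x =
      y + (n : ℝ) * r * y + 2 * (a * y - b * y ^ 2)
        + 2 * r * (x ⬝ᵥ (m - y • κ - θ *ᵥ x))) :
    ∃ d : ℝ, ∀ y : ℝ, 0 ≤ y → ∀ x : Fin n → ℝ,
      AV y x ≤ -c * V y x + d := by
  -- key eigenvalue bound
  have key : ∀ x : Fin n → ℝ, lmin * (x ⬝ᵥ x) ≤ x ⬝ᵥ (θ *ᵥ x) := by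
    intro x
    have hH : (θ - lmin • (1 : Matrix (Fin n) (Fin n) ℝ)).IsHermitian :=
      hθ.1.sub (by simp [Matrix.IsHermitian, Matrix.conjTranspose_smul])
    have hB : (θ - lmin • (1 : Matrix (Fin n) (Fin n) ℝ)).PosSemidef := by
      refine hH.posSemidef_iff_eigenvalues_nonneg.mpr fun i => ?_
      have hmem : hH.eigenvalues i ∈ spectrum ℝ θ - ({lmin} : Set ℝ) := by
        rw [spectrum.sub_singleton_eq, Algebra.algebraMap_eq_smul_one]
        exact hH.eigenvalues_mem_spectrum_real i
      obtain ⟨u, hu, v, hv, huv⟩ := hmem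
      simp only [Set.mem_singleton_iff] at hv
      rw [hv] at huv
      have h := hlmin.2 hu
      rw [← huv]
      exact sub_nonneg.mpr h
    have h0 := hB.re_dotProduct_nonneg x
    have hx : (star x : Fin n → ℝ) = x := by ext i; simp
    rw [hx] at h0
    simp only [RCLike.re_to_real] at h0
    have hexp : x ⬝ᵥ ((θ - lmin • (1 : Matrix (Fin n) (Fin n) ℝ)) *ᵥ x)
        = x ⬝ᵥ (θ *ᵥ x) - lmin * (x ⬝ᵥ x) := by
      rw [Matrix.sub_mulVec, dotProduct_sub, Matrix.smul_mulVec, Matrix.one_mulVec,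
        dotProduct_smul, smul_eq_mul]
    rw [hexp] at h0
    linarith
  -- basic constants
  have hα : 0 < 2 * b - c := by
    have h := min_le_right lmin b; linarith
  have hβ : 0 < 2 * lmin - c := by
    have h := min_le_left lmin b; linarith
  set Q : ℝ := κ ⬝ᵥ κ with hQdef
  have hQ : 0 < Q := by
    rcases lt_or_eq_of_le (Finset.sum_nonneg fun i _ => mul_self_nonneg (κ i)) with h | h
    · exact h
    · exact absurd (dotProduct_self_eq_zero.mp h.symm) hκ
  set α : ℝ := 2 * b - c with hαdef
  set β : ℝ := 2 * lmin - c with hβdef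
  have hrQ : r * Q < β * α := by
    rw [div_eq_mul_inv] at hr'
    calc r * Q < (β * α * Q⁻¹) * Q := mul_lt_mul_of_pos_right hr' hQ
      _ = β * α := by field_simp
  set δ : ℝ := (r * Q / β + α) / 2 with hδdef
  have hδα : r * Q / β < α := (div_lt_iff₀ hβ).mpr (by nlinarith)
  have hδ1 : r * Q / β < δ := by rw [hδdef]; linarith
  have hδpos : 0 < δ := lt_of_le_of_lt (by positivity) hδ1
  have hδ2 : δ < α := by rw [hδdef]; linarith
  set p : ℝ := α - δ with hpdef
  have hp : 0 < p := by rw [hpdef]; linarith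
  set q : ℝ := r * β - r ^ 2 * Q / δ with hqdef
  have hq : 0 < q := by
    have h1 : r ^ 2 * Q / δ < r * β := by
      rw [div_lt_iff₀ hδpos]
      rw [div_lt_iff₀ hβ] at hδ1
      nlinarith
    rw [hqdef]; linarith
  set K : ℝ := 1 + (n : ℝ) * r + 2 * a with hKdef
  set M2 : ℝ := m ⬝ᵥ m with hM2def
  have hM2 : 0 ≤ M2 := Finset.sum_nonneg fun i _ => mul_self_nonneg (m i)
  set D1 : ℝ := K ^ 2 / (4 * p) with hD1def
  set D2 : ℝ := r ^ 2 * M2 / q with hD2def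
  have hD1 : 4 * p * D1 = K ^ 2 := by rw [hD1def]; field_simp
  have hD2 : q * D2 = r ^ 2 * M2 := by rw [hD2def]; field_simp
  have hδq : δ * (r * β - q) = r ^ 2 * Q := by rw [hqdef]; field_simp; ring
  clear_value Q α β δ p q K M2 D1 D2
  clear hδdef hD1def hD2def hqdef hr' hδα hδ1 hδ2
  refine ⟨D1 + D2, fun y hy x => ?_⟩
  rw [hAV, hV]
  set P : ℝ := x ⬝ᵥ x with hPdef
  have hP : 0 ≤ P := Finset.sum_nonneg fun i _ => mul_self_nonneg (x i)
  set S : ℝ := x ⬝ᵥ κ with hSdef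
  set T : ℝ := x ⬝ᵥ m with hTdef
  set E : ℝ := x ⬝ᵥ (θ *ᵥ x) with hEdef
  have hE : lmin * P ≤ E := key x
  have hCS : S ^ 2 ≤ P * Q := by
    simpa [hSdef, hPdef, hQdef, dotProduct, pow_two] using
      Finset.sum_mul_sq_le_sq_mul_sq Finset.univ x κ
  have hCT : T ^ 2 ≤ P * M2 := by
    simpa [hTdef, hPdef, hM2def, dotProduct, pow_two] using
      Finset.sum_mul_sq_le_sq_mul_sq Finset.univ x m
  have hexp2 : x ⬝ᵥ (m - y • κ - θ *ᵥ x) = T - y * S - E := by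
    rw [dotProduct_sub, dotProduct_sub, dotProduct_smul, smul_eq_mul]
  rw [hexp2]
  clear_value P S T E
  clear hPdef hSdef hTdef hEdef hQdef hM2def
  -- piece 1: -(2*r*y*S) ≤ δ*y^2 + (r*β - q)*P
  have h1 : -(2 * r * y * S) ≤ δ * y ^ 2 + (r * β - q) * P := by
    have hmul : δ * (-(2 * r * y * S)) ≤ δ * (δ * y ^ 2 + (r * β - q) * P) := by
      have hrw : δ * (δ * y ^ 2 + (r * β - q) * P) = δ ^ 2 * y ^ 2 + r ^ 2 * Q * P := by
        rw [mul_add, ← mul_assoc δ (r * β - q) P, hδq]; ring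
      rw [hrw]
      have hS2 : r ^ 2 * S ^ 2 ≤ r ^ 2 * (P * Q) :=
        mul_le_mul_of_nonneg_left hCS (by positivity)
      nlinarith [sq_nonneg (δ * y + r * S)]
    exact le_of_mul_le_mul_left hmul hδpos
  -- piece 2: 2*r*T - q*P ≤ D2
  have hD2nn : 0 ≤ D2 := by nlinarith [hD2, hq, hM2, sq_nonneg r, mul_nonneg (sq_nonneg r) hM2]
  have h2 : 2 * r * T - q * P ≤ D2 := by
    rcases le_or_gt T 0 with hT0 | hT0
    · have h2a : 2 * r * T ≤ 0 := by nlinarith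
      have h2b : 0 ≤ q * P := mul_nonneg hq.le hP
      linarith
    · have hmul : q * (2 * r * T - q * P) ≤ q * D2 := by
        rw [hD2]
        have hT2 : (r * T) ^ 2 ≤ P * (r ^ 2 * M2) := by nlinarith [hCT, sq_nonneg r]
        have h4q : 4 * q ^ 2 * (r * T) ^ 2 ≤ 4 * q ^ 2 * (P * (r ^ 2 * M2)) :=
          mul_le_mul_of_nonneg_left hT2 (by positivity)
        have hbnn : 0 ≤ q ^ 2 * P + r ^ 2 * M2 := by positivity
        have hab : (2 * q * (r * T)) ^ 2 ≤ (q ^ 2 * P + r ^ 2 * M2) ^ 2 := by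
          nlinarith [h4q, sq_nonneg (q ^ 2 * P - r ^ 2 * M2)]
        have hle : 2 * q * (r * T) ≤ q ^ 2 * P + r ^ 2 * M2 := by nlinarith [hab, hbnn]
        nlinarith [hle]
      exact le_of_mul_le_mul_left hmul hq
  -- piece 3: K*y - p*y^2 ≤ D1
  have h3 : K * y - p * y ^ 2 ≤ D1 := by
    have hmul : (4 * p) * (K * y - p * y ^ 2) ≤ (4 * p) * D1 := by
      rw [show (4 * p) * D1 = 4 * p * D1 from rfl, hD1]
      nlinarith [sq_nonneg (K - 2 * p * y)]
    exact le_of_mul_le_mul_left hmul (by positivity)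
  -- assemble
  have hrE : 2 * r * (lmin * P) ≤ 2 * r * E := mul_le_mul_of_nonneg_left hE (by positivity)
  have hKy : K * y = y + (n : ℝ) * r * y + 2 * a * y := by rw [hKdef]; ring
  have hpy : p * y ^ 2 = α * y ^ 2 - δ * y ^ 2 := by rw [hpdef]; ring
  have hαy : α * y ^ 2 = 2 * b * y ^ 2 - c * y ^ 2 := by rw [hαdef]; ring
  have hβP : r * β * P = 2 * r * (lmin * P) - c * r * P := by rw [hβdef]; ring
  linarith [h1, h2, h3, hrE, hKy, hpy, hαy, hβP]
end
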